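/- Let n ≥ 2, p ≥ 2, τ = σ_1 σ_2 ⋯ σ_{n−1} in B_n, and for z ≥ 1 let Ψ^z_{ij} (1 ≤ i, j ≤ n) denote the p × p blocks of Φ^L_{(τ^{(p)})^z} over 𝒜_{np}. Then: (i) Ψ^{z+1}_{i,j+1} = φ_{τ^{(p)}}(Ψ^z_{ij}) (entrywise) for all 1 ≤ i ≤ n and 1 ≤ j ≤ n−1; (ii) Ψ^{z+1}_{nj} = Ψ^z_{1j} for all 1 ≤ j ≤ n; and (iii) Ψ^{z+1}_{ij} = Ψ^z_{i+1,j} + φ_{(τ^{(p)})^z}(Ψ^1_{i1}) · Ψ^z_{1j} for all 1 ≤ i ≤ n−1 and 1 ≤ j ≤ n. -/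

import Mathlib

open scoped TensorProduct

/-- Generator index set for the algebra `𝒜ₙ`: pairs `(i,j)` with `1 ≤ i,j ≤ n`, `i ≠ j`. -/
abbrev Idx (n : ℕ) : Type := {q : ℕ × ℕ // q.1 ≠ q.2 ∧ 1 ≤ q.1 ∧ q.1 ≤ n ∧ 1 ≤ q.2 ∧ q.2 ≤ n}

/-- `𝒜ₙ`, the free noncommutative unital `ℤ`-algebra on the generators `a_{ij}`. -/
abbrev FA (n : ℕ) : Type := FreeAlgebra ℤ (Idx n)

/-- The generator `a_{ij}` when the indices are in range (`1 ≤ i,j ≤ n`, `i ≠ j`); `0` otherwise. -/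
noncomputable def gen (n i j : ℕ) : FA n :=
  if h : i ≠ j ∧ 1 ≤ i ∧ i ≤ n ∧ 1 ≤ j ∧ j ≤ n then FreeAlgebra.ι ℤ (⟨(i, j), h⟩ : Idx n) else 0

/-- Image of the generator `a_{ij}` under `φ_{σ_k}`. -/
noncomputable def phiGenImg (n k i j : ℕ) : FA n :=
  if i = k then
    (if j = k + 1 then -gen n (k+1) k
     else gen n (k+1) j - gen n (k+1) k * gen n k j)
  else if i = k + 1 then
    (if j = k then -gen n k (k+1) else gen n k j)
  else
    if j = k then gen n i (k+1) - gen n i k * gen n k (k+1)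
    else if j = k + 1 then gen n i k
    else gen n i j

/-- Image of the generator `a_{ij}` under `φ_{σ_k}⁻¹ = φ_{σ_k⁻¹}`. -/
noncomputable def phiInvGenImg (n k i j : ℕ) : FA n :=
  if i = k + 1 then
    (if j = k then -gen n k (k+1)
     else gen n k j - gen n k (k+1) * gen n (k+1) j)
  else if i = k then
    (if j = k + 1 then -gen n (k+1) k else gen n (k+1) j)
  else
    if j = k + 1 then gen n i k - gen n i (k+1) * gen n (k+1) k
    else if j = k then gen n i (k+1)
    else gen n i j

/-- `φ_{σ_k}` for the letter `(k, true)` and `φ_{σ_k⁻¹}` for the letter `(k, false)`. -/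
noncomputable def phiLetter (n : ℕ) (l : ℕ × Bool) : FA n →ₐ[ℤ] FA n :=
  FreeAlgebra.lift ℤ fun g : Idx n =>
    if l.2 then phiGenImg n l.1 g.val.1 g.val.2 else phiInvGenImg n l.1 g.val.1 g.val.2

/-- `φ_β` for a word `β` in the letters `σ_k^{±1}`, with `φ_{β₁β₂} = φ_{β₁} ∘ φ_{β₂}`. -/
noncomputable def phiWord (n : ℕ) (w : List (ℕ × Bool)) : FA n →ₐ[ℤ] FA n :=
  w.foldr (fun l f => (phiLetter n l).comp f) (AlgHom.id ℤ (FA n))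

/-- `β` is a word in the generators `σ_1^{±1}, …, σ_{n−1}^{±1}` of the braid group `B_n`. -/
def WordIn (n : ℕ) (w : List (ℕ × Bool)) : Prop := ∀ l ∈ w, 1 ≤ l.1 ∧ l.1 + 1 ≤ n

/-- The natural inclusion `𝒜ₙ → 𝒜ₙ₊₁`. -/
noncomputable def incl (n : ℕ) : FA n →ₐ[ℤ] FA (n+1) :=
  FreeAlgebra.lift ℤ fun g : Idx n => gen (n+1) g.val.1 g.val.2

/-- `M` (a matrix recorded as a function `ℕ → ℕ → 𝒜ₙ`, supported on `[1,n] × [1,n]`)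
is the matrix `Φ^L_β`:  `φ*_β(a_{i,n+1}) = ∑_j M_{ij} a_{j,n+1}`. -/
def IsPhiL (n : ℕ) (w : List (ℕ × Bool)) (M : ℕ → ℕ → FA n) : Prop :=
  (∀ i j, i ∉ Finset.Icc 1 n ∨ j ∉ Finset.Icc 1 n → M i j = 0) ∧
  ∀ i ∈ Finset.Icc 1 n,
    phiWord (n+1) w (gen (n+1) i (n+1)) =
      ∑ j ∈ Finset.Icc 1 n, incl n (M i j) * gen (n+1) j (n+1)

/-- `M` is the matrix `Φ^R_β`:  `φ*_β(a_{n+1,i}) = ∑_j a_{n+1,j} M_{ji}`. -/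
def IsPhiR (n : ℕ) (w : List (ℕ × Bool)) (M : ℕ → ℕ → FA n) : Prop :=
  (∀ i j, i ∉ Finset.Icc 1 n ∨ j ∉ Finset.Icc 1 n → M i j = 0) ∧
  ∀ i ∈ Finset.Icc 1 n,
    phiWord (n+1) w (gen (n+1) (n+1) i) =
      ∑ j ∈ Finset.Icc 1 n, gen (n+1) (n+1) j * incl n (M j i)

/-- The permutation (of `ℕ`, via 1-based strand labels) determined by a braid word,
with `perm (w₁ ++ w₂) = perm w₁ * perm w₂`. -/
def permWord (w : List (ℕ × Bool)) : Equiv.Perm ℕ :=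
  w.foldr (fun l f => Equiv.swap l.1 (l.1 + 1) * f) 1

/-- The writhe (exponent sum) of a braid word. -/
def writhe (w : List (ℕ × Bool)) : ℤ :=
  (w.map fun l => if l.2 then (1 : ℤ) else -1).sum

/-- Conjugation, as an algebra map to the opposite algebra. -/
noncomputable def conjHom (n : ℕ) : FA n →ₐ[ℤ] (FA n)ᵐᵒᵖ :=
  FreeAlgebra.lift ℤ fun g : Idx n => MulOpposite.op (gen n g.val.2 g.val.1)

/-- Conjugation `x ↦ x̄`: the `ℤ`-linear anti-automorphism with `a_{ij} ↦ a_{ji}`. -/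
noncomputable def conj (n : ℕ) (x : FA n) : FA n := (conjHom n x).unop

/-- Conjugation as a `ℤ`-linear map. -/
noncomputable def conjLin (n : ℕ) : FA n →ₗ[ℤ] FA n :=
  (MulOpposite.opLinearEquiv ℤ).symm.toLinearMap ∘ₗ (conjHom n).toLinearMap

/-- The word `τ_{a,p} = σ_a σ_{a+1} ⋯ σ_{a+p−1}`. -/
def tauWord (a p : ℕ) : List (ℕ × Bool) := (List.range p).map fun t => (a + t, true)

/-- The word `κ_{a,l} = τ_{a+l−1,p} τ_{a+l−2,p} ⋯ τ_{a,p}`. -/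
def kappaWord (a l p : ℕ) : List (ℕ × Bool) :=
  (((List.range l).reverse).map fun t => tauWord (a + t) p).flatten

/-- The inverse of a braid word. -/
def invWord (w : List (ℕ × Bool)) : List (ℕ × Bool) := w.reverse.map fun l => (l.1, !l.2)

/-- The `p`-cable `α^{(p)}` of a braid word `α` (each strand replaced by `p` parallel strands):
substitute `σ_m ↦ κ_{(m−1)p+1,p}` and `σ_m⁻¹ ↦ κ_{(m−1)p+1,p}⁻¹`. -/
def cable (p : ℕ) (w : List (ℕ × Bool)) : List (ℕ × Bool) :=
  (w.map fun l =>
    if l.2 then kappaWord ((l.1 - 1) * p + 1) p p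
    else invWord (kappaWord ((l.1 - 1) * p + 1) p p)).flatten

/-- The product `a_{x₁x₂} a_{x₂x₃} ⋯ a_{x_{m-1}x_m}` along a list `[x₁, …, x_m]`
(`1` for lists of length `≤ 1`). -/
noncomputable def pathFactors (n : ℕ) : List ℕ → FA n
  | x :: y :: rest => gen n x y * pathFactors n (y :: rest)
  | _ => 1

/-- `A(i,j,X) = Σ_{Y ⊆ X} (−1)^{|Y|} a_{i y₁} a_{y₁ y₂} ⋯ a_{y_k j}` (ascending order on `Y`). -/
noncomputable def Aexp (n i j : ℕ) (X : Finset ℕ) : FA n :=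
  ∑ Y ∈ X.powerset, ((-1 : ℤ) ^ Y.card) • pathFactors n (i :: (Y.sort (· ≤ ·) ++ [j]))

/-- `A'(i,j,X) = Σ_{Y ⊆ X} (−1)^{|Y|} a_{i y_k} a_{y_k y_{k−1}} ⋯ a_{y₁ j}` (descending order). -/
noncomputable def A'exp (n i j : ℕ) (X : Finset ℕ) : FA n :=
  ∑ Y ∈ X.powerset, ((-1 : ℤ) ^ Y.card) • pathFactors n (i :: ((Y.sort (· ≤ ·)).reverse ++ [j]))

/-- `B'(i,j,X) = Σ_{Y ⊆ X, min Y ≠ j} c_Y a_{i y_k} ⋯ a_{y₁ j}`, where `c_Y = (−1)^{|Y|+1}` if all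
elements of `Y` exceed `j` (including `Y = ∅`), and `c_Y = (−1)^{|Y|}` otherwise. -/
noncomputable def B'exp (n i j : ℕ) (X : Finset ℕ) : FA n :=
  ∑ Y ∈ X.powerset.filter (fun Y => Y.min ≠ (j : WithTop ℕ)),
    (if ∀ y ∈ Y, j < y then ((-1 : ℤ) ^ (Y.card + 1)) else ((-1 : ℤ) ^ Y.card)) •
      pathFactors n (i :: ((Y.sort (· ≤ ·)).reverse ++ [j]))

/-- For `i = (q_i − 1)p + r_i` with `1 ≤ r_i ≤ p`: the quotient `q_i`. -/
def qIdx (p i : ℕ) : ℕ := (i - 1) / p + 1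

/-- For `i = (q_i − 1)p + r_i` with `1 ≤ r_i ≤ p`: the remainder `r_i`. -/
def rIdx (p i : ℕ) : ℕ := (i - 1) % p + 1

/-- The homomorphism `ψ : 𝒜_{kp} → 𝒜_k ⊗ 𝒜_p`. -/
noncomputable def psi (k p : ℕ) : FA (k * p) →ₐ[ℤ] @TensorProduct ℤ _ (FA k) (FA p) _ _ Algebra.toModule Algebra.toModule :=
  FreeAlgebra.lift ℤ fun g : Idx (k * p) =>
    if qIdx p g.val.1 = qIdx p g.val.2 then
      (1 : FA k) ⊗ₜ[ℤ] gen p (rIdx p g.val.1) (rIdx p g.val.2)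
    else if rIdx p g.val.1 = rIdx p g.val.2 then
      gen k (qIdx p g.val.1) (qIdx p g.val.2) ⊗ₜ[ℤ] (1 : FA p)
    else if (qIdx p g.val.1 < qIdx p g.val.2 ∧ rIdx p g.val.2 < rIdx p g.val.1) ∨
            (qIdx p g.val.2 < qIdx p g.val.1 ∧ rIdx p g.val.1 < rIdx p g.val.2) then 0
    else gen k (qIdx p g.val.1) (qIdx p g.val.2) ⊗ₜ[ℤ] gen p (rIdx p g.val.1) (rIdx p g.val.2)

/-- `ψ*(x · a_{i,*}) = ψ(x) · (a_{q_i,*} ⊗ a_{r_i,*})`, the image of the element `x · a_{i,*}`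
of `𝒜_{kp}^L` under `ψ* : 𝒜_{kp}^L → 𝒜_k^L ⊗ 𝒜_p^L`, the target realized inside
`𝒜_{k+1} ⊗ 𝒜_{p+1}`. -/
noncomputable def psiStarElt (k p : ℕ) (x : FA (k * p)) (i : ℕ) :
    @TensorProduct ℤ _ (FA (k+1)) (FA (p+1)) _ _ Algebra.toModule Algebra.toModule :=
  (Algebra.TensorProduct.map (incl k) (incl p)) (psi k p x) *
    ((gen (k+1) (qIdx p i) (k+1) ⊗ₜ[ℤ] gen (p+1) (rIdx p i) (p+1) :
      @TensorProduct ℤ _ (FA (k+1)) (FA (p+1)) _ _ Algebra.toModule Algebra.toModule))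

/-- The `(i,j)` entry of `Δ(β) = diag[(−1)^{w(β)}, 1, …, 1]` (1-based indices). -/
noncomputable def deltaEnt (w : List (ℕ × Bool)) (i j : ℕ) : ℂ :=
  if i = j then (if i = 1 then (-1 : ℂ) ^ writhe w else 1) else 0

/-- The word `(τ^{(p)})^z` in the generators of `B_{np}`, for `τ = σ_1⋯σ_{n−1} ∈ B_n`. -/
def powWord (n p z : ℕ) : List (ℕ × Bool) :=
  (List.replicate z (cable p (tauWord 1 (n-1)))).flatten


/-!
Write `C = τ^{(p)}` and `N = np`. Since `(τ^{(p)})^{z+1} = C (τ^{(p)})^z = (τ^{(p)})^z C`, the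
chain rule `Φ^L_{β₁β₂} = φ_{β₁}(Φ^L_{β₂}) Φ^L_{β₁}` gives
`Φ^L_{(τ^{(p)})^{z+1}} = φ_C(Φ^L_{(τ^{(p)})^z}) Φ^L_C = φ_{(τ^{(p)})^z}(Φ^L_C) Φ^L_{(τ^{(p)})^z}`.
Outside its first block column, `Φ^L_C` is the block shift by `p`: tracking `a_{u,N+1}` through
the letters of `C` gives `φ_C(a_{u,N+1}) = a_{u+p,N+1} + (terms in a_{1,N+1}, …, a_{p,N+1})` for
`u ≤ N - p` and `φ_C(a_{N-p+s,N+1}) = a_{s,N+1}`. Recursion (i) is read off the first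
factorization, (ii) and (iii) off the second.
-/

section Generators

variable {N : ℕ}

lemma gen_of_valid {i j : ℕ} (h : i ≠ j ∧ 1 ≤ i ∧ i ≤ N ∧ 1 ≤ j ∧ j ≤ N) :
    gen N i j = FreeAlgebra.ι ℤ (⟨(i, j), h⟩ : Idx N) := dif_pos h

lemma gen_of_not_valid {i j : ℕ} (h : ¬(i ≠ j ∧ 1 ≤ i ∧ i ≤ N ∧ 1 ≤ j ∧ j ≤ N)) :
    gen N i j = 0 := dif_neg h

lemma incl_ι (g : Idx N) : incl N (FreeAlgebra.ι ℤ g) = gen (N+1) g.val.1 g.val.2 :=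
  FreeAlgebra.lift_ι_apply _ _

lemma incl_gen {x y : ℕ} (hx : x ≠ N + 1) (hy : y ≠ N + 1) :
    incl N (gen N x y) = gen (N+1) x y := by
  by_cases h : x ≠ y ∧ 1 ≤ x ∧ x ≤ N ∧ 1 ≤ y ∧ y ≤ N
  · rw [gen_of_valid h, incl_ι]
  · rw [gen_of_not_valid h, map_zero, gen_of_not_valid]
    omega

lemma phiLetter_gen (l : ℕ × Bool) {x y : ℕ} (h : x ≠ y ∧ 1 ≤ x ∧ x ≤ N ∧ 1 ≤ y ∧ y ≤ N) :
    phiLetter N l (gen N x y) =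
      if l.2 then phiGenImg N l.1 x y else phiInvGenImg N l.1 x y := by
  rw [gen_of_valid h, phiLetter, FreeAlgebra.lift_ι_apply]

lemma incl_phiGenImg {k a b : ℕ} (hk : k + 1 ≤ N) (ha : a ≤ N) (hb : b ≤ N) :
    incl N (phiGenImg N k a b) = phiGenImg (N+1) k a b := by
  unfold phiGenImg
  split_ifs <;> simp (disch := omega) only [map_sub, map_mul, map_neg, incl_gen]

lemma incl_phiInvGenImg {k a b : ℕ} (hk : k + 1 ≤ N) (ha : a ≤ N) (hb : b ≤ N) :
    incl N (phiInvGenImg N k a b) = phiInvGenImg (N+1) k a b := by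
  unfold phiInvGenImg
  split_ifs <;> simp (disch := omega) only [map_sub, map_mul, map_neg, incl_gen]

lemma phiLetter_incl {l : ℕ × Bool} (hl : l.1 + 1 ≤ N) (c : FA N) :
    phiLetter (N+1) l (incl N c) = incl N (phiLetter N l c) := by
  refine AlgHom.congr_fun (φ₁ := (phiLetter (N+1) l).comp (incl N))
    (φ₂ := (incl N).comp (phiLetter N l)) ?_ c
  refine FreeAlgebra.hom_ext (funext fun ⟨⟨x, y⟩, hxy⟩ => ?_)
  have hxy' : x ≠ y ∧ 1 ≤ x ∧ x ≤ N + 1 ∧ 1 ≤ y ∧ y ≤ N + 1 := by omega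
  simp only [Function.comp_apply, AlgHom.coe_comp, incl_ι]
  rw [phiLetter_gen l hxy', ← gen_of_valid hxy, phiLetter_gen l hxy]
  split_ifs
  · exact (incl_phiGenImg hl hxy.2.2.1 hxy.2.2.2.2).symm
  · exact (incl_phiInvGenImg hl hxy.2.2.1 hxy.2.2.2.2).symm

lemma phiWord_cons (l : ℕ × Bool) (w : List (ℕ × Bool)) (x : FA N) :
    phiWord N (l :: w) x = phiLetter N l (phiWord N w x) := rfl

lemma phiWord_append (w₁ w₂ : List (ℕ × Bool)) (x : FA N) :
    phiWord N (w₁ ++ w₂) x = phiWord N w₁ (phiWord N w₂ x) := by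
  induction w₁ with
  | nil => rfl
  | cons l w₁ ih => exact congrArg (phiLetter N l) ih

lemma phiWord_incl {w : List (ℕ × Bool)} (hw : WordIn N w) (c : FA N) :
    phiWord (N+1) w (incl N c) = incl N (phiWord N w c) := by
  induction w with
  | nil => rfl
  | cons l w ih =>
    have hl := hw l List.mem_cons_self
    rw [WordIn, List.forall_mem_cons] at hw
    rw [phiWord_cons, phiWord_cons, ih hw.2, phiLetter_incl hl.2]

end Generators

section ColumnCoefficients

variable {N : ℕ}

/-- Sends `a_{j,N+1}` to the square-zero element `ε` and every other generator involving the
index `N+1` to `0`; the `ε`-part of the image of `∑_b c_b a_{b,N+1}` is then `c_j`. -/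
noncomputable def coeffAlgHom (N j : ℕ) : FA (N+1) →ₐ[ℤ] TrivSqZeroExt (FA N) (FA N) :=
  FreeAlgebra.lift ℤ fun g : Idx (N+1) =>
    if g.val.1 ≤ N ∧ g.val.2 ≤ N then TrivSqZeroExt.inl (gen N g.val.1 g.val.2)
    else if g.val.1 = j ∧ g.val.2 = N + 1 then TrivSqZeroExt.inr 1 else 0

noncomputable def colCoeff (N j : ℕ) (x : FA (N+1)) : FA N := (coeffAlgHom N j x).snd

lemma colCoeff_add (j : ℕ) (x y : FA (N+1)) :
    colCoeff N j (x + y) = colCoeff N j x + colCoeff N j y := by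
  rw [colCoeff, map_add, TrivSqZeroExt.snd_add]; rfl

lemma coeffAlgHom_comp_incl (j : ℕ) :
    (coeffAlgHom N j).comp (incl N) = (TrivSqZeroExt.inlHom (FA N) (FA N)).toIntAlgHom := by
  refine FreeAlgebra.hom_ext (funext fun ⟨⟨x, y⟩, hxy⟩ => ?_)
  have hxy' : x ≠ y ∧ 1 ≤ x ∧ x ≤ N + 1 ∧ 1 ≤ y ∧ y ≤ N + 1 := by omega
  simp only [Function.comp_apply, AlgHom.coe_comp, incl_ι]
  rw [gen_of_valid hxy', coeffAlgHom, FreeAlgebra.lift_ι_apply, if_pos ⟨hxy.2.2.1, hxy.2.2.2.2⟩,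
    gen_of_valid hxy]
  rfl

lemma coeffAlgHom_gen {j b : ℕ} (hb : b ∈ Finset.Icc 1 N) :
    coeffAlgHom N j (gen (N+1) b (N+1)) = if b = j then TrivSqZeroExt.inr 1 else 0 := by
  rw [Finset.mem_Icc] at hb
  rw [gen_of_valid (by omega), coeffAlgHom, FreeAlgebra.lift_ι_apply]
  simp only [and_true]
  rw [if_neg (by omega)]

lemma colCoeff_incl_mul_gen {j : ℕ} (hj : j ∈ Finset.Icc 1 N) (c : FA N) (b : ℕ) :
    colCoeff N j (incl N c * gen (N+1) b (N+1)) = if b = j then c else 0 := by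
  by_cases hb : b ∈ Finset.Icc 1 N
  · have hc : coeffAlgHom N j (incl N c) = TrivSqZeroExt.inl c :=
      AlgHom.congr_fun (coeffAlgHom_comp_incl j) c
    rw [colCoeff, map_mul, hc, coeffAlgHom_gen hb]
    split_ifs
    · rw [TrivSqZeroExt.inl_mul_inr, TrivSqZeroExt.snd_inr, smul_eq_mul, mul_one]
    · rw [mul_zero, TrivSqZeroExt.snd_zero]
  · rw [gen_of_not_valid (by simp only [Finset.mem_Icc] at hb; omega), mul_zero, colCoeff,
      map_zero, TrivSqZeroExt.snd_zero, if_neg (by rintro rfl; exact hb hj)]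

lemma colCoeff_gen {j : ℕ} (hj : j ∈ Finset.Icc 1 N) (b : ℕ) :
    colCoeff N j (gen (N+1) b (N+1)) = if b = j then 1 else 0 := by
  simpa using colCoeff_incl_mul_gen hj 1 b

lemma colCoeff_sum {j : ℕ} (hj : j ∈ Finset.Icc 1 N) (S : Finset ℕ) (f : ℕ → FA N) :
    colCoeff N j (∑ b ∈ S, incl N (f b) * gen (N+1) b (N+1)) = if j ∈ S then f j else 0 := by
  rw [colCoeff, map_sum, TrivSqZeroExt.snd_sum]
  exact (Finset.sum_congr rfl fun b _ => colCoeff_incl_mul_gen hj (f b) b).trans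
    (Finset.sum_ite_eq' S j f)

lemma IsPhiL.apply_eq_colCoeff {w : List (ℕ × Bool)} {M : ℕ → ℕ → FA N} (hM : IsPhiL N w M)
    {i j : ℕ} (hi : i ∈ Finset.Icc 1 N) (hj : j ∈ Finset.Icc 1 N) :
    M i j = colCoeff N j (phiWord (N+1) w (gen (N+1) i (N+1))) := by
  rw [hM.2 i hi, colCoeff_sum hj, if_pos hj]

lemma IsPhiL.unique {w : List (ℕ × Bool)} {M M' : ℕ → ℕ → FA N} (hM : IsPhiL N w M)
    (hM' : IsPhiL N w M') : M = M' := by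
  funext i j
  by_cases h : i ∈ Finset.Icc 1 N ∧ j ∈ Finset.Icc 1 N
  · rw [hM.apply_eq_colCoeff h.1 h.2, hM'.apply_eq_colCoeff h.1 h.2]
  · rw [hM.1 i j (by tauto), hM'.1 i j (by tauto)]

end ColumnCoefficients

section ChainRule

variable {N : ℕ} {w₁ w₂ : List (ℕ × Bool)} {A B : ℕ → ℕ → FA N}

lemma isPhiL_append (hw₁ : WordIn N w₁) (hA : IsPhiL N w₁ A) (hB : IsPhiL N w₂ B) :
    IsPhiL N (w₁ ++ w₂) fun i k => ∑ j ∈ Finset.Icc 1 N, phiWord N w₁ (B i j) * A j k := by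
  refine ⟨fun i k hik => ?_, fun i hi => ?_⟩
  · refine Finset.sum_eq_zero fun j hj => ?_
    rcases hik with hi | hk
    · rw [hB.1 i j (Or.inl hi), map_zero, zero_mul]
    · rw [hA.1 j k (Or.inr hk), mul_zero]
  · rw [phiWord_append, hB.2 i hi, map_sum]
    simp only [map_mul, phiWord_incl hw₁, map_sum, Finset.sum_mul]
    rw [Finset.sum_comm]
    refine Finset.sum_congr rfl fun j hj => ?_
    rw [hA.2 j hj, Finset.mul_sum]
    simp only [mul_assoc]

lemma IsPhiL.apply_of_append {M : ℕ → ℕ → FA N} (hM : IsPhiL N (w₁ ++ w₂) M)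
    (hw₁ : WordIn N w₁) (hA : IsPhiL N w₁ A) (hB : IsPhiL N w₂ B) (i k : ℕ) :
    M i k = ∑ j ∈ Finset.Icc 1 N, phiWord N w₁ (B i j) * A j k :=
  congrFun (congrFun (hM.unique (isPhiL_append hw₁ hA hB)) i) k

end ChainRule

section Words

lemma tauWord_succ (a p : ℕ) : tauWord a (p+1) = (a, true) :: tauWord (a+1) p := by
  simp only [tauWord, List.range_succ_eq_map, List.map_cons, List.map_map, add_zero]
  congr 1
  exact List.map_congr_left fun t _ => by simp only [Function.comp_apply]; congr 1; omega

lemma kappaWord_succ (a l p : ℕ) :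
    kappaWord a (l+1) p = tauWord (a+l) p ++ kappaWord a l p := by
  simp [kappaWord, List.range_succ]

lemma cable_tauWord_succ (p m : ℕ) :
    cable p (tauWord 1 (m+1)) = cable p (tauWord 1 m) ++ kappaWord (m*p+1) p p := by
  simp [tauWord, List.range_succ, cable, add_comm 1 m]

lemma powWord_succ (n p z : ℕ) :
    powWord n p (z+1) = cable p (tauWord 1 (n-1)) ++ powWord n p z := by
  simp [powWord, List.replicate_succ]

lemma powWord_succ' (n p z : ℕ) :
    powWord n p (z+1) = powWord n p z ++ cable p (tauWord 1 (n-1)) := by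
  simp [powWord, List.replicate_succ']

lemma powWord_one (n p : ℕ) : powWord n p 1 = cable p (tauWord 1 (n-1)) := by
  simp [powWord]

variable {N : ℕ}

lemma wordIn_append {w₁ w₂ : List (ℕ × Bool)} (h₁ : WordIn N w₁) (h₂ : WordIn N w₂) :
    WordIn N (w₁ ++ w₂) :=
  List.forall_mem_append.mpr ⟨h₁, h₂⟩

lemma wordIn_tauWord {a p : ℕ} (ha : 1 ≤ a) (hN : a + p ≤ N) : WordIn N (tauWord a p) := by
  simp only [WordIn, tauWord, List.forall_mem_map, List.mem_range]
  omega

lemma wordIn_kappaWord {a l p : ℕ} (ha : 1 ≤ a) (hN : a + l + p ≤ N + 1) :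
    WordIn N (kappaWord a l p) := by
  induction l with
  | zero => exact List.forall_mem_nil _
  | succ l ih =>
    rw [kappaWord_succ]
    exact wordIn_append (wordIn_tauWord (by omega) (by omega)) (ih (by omega))

lemma wordIn_cable_tauWord {p m : ℕ} (hN : m * p + p ≤ N) :
    WordIn N (cable p (tauWord 1 m)) := by
  induction m with
  | zero => exact List.forall_mem_nil _
  | succ m ih =>
    rw [Nat.succ_mul] at hN
    rw [cable_tauWord_succ]
    exact wordIn_append (ih (by omega)) (wordIn_kappaWord (by omega) (by omega))

lemma wordIn_powWord {n p z : ℕ} (hN : (n-1) * p + p ≤ N) : WordIn N (powWord n p z) := by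
  induction z with
  | zero => exact List.forall_mem_nil _
  | succ z ih =>
    rw [powWord_succ]
    exact wordIn_append (wordIn_cable_tauWord hN) ih

end Words

section ColumnAction

variable {N : ℕ}

lemma phiLetter_gen_col {k x : ℕ} (hk : k + 1 ≤ N) (hx : 1 ≤ x) (hxN : x ≤ N) :
    phiLetter (N+1) (k, true) (gen (N+1) x (N+1)) =
      if x = k then gen (N+1) (k+1) (N+1) - incl N (gen N (k+1) k) * gen (N+1) k (N+1)
      else if x = k + 1 then gen (N+1) k (N+1)
      else gen (N+1) x (N+1) := by
  rw [phiLetter_gen _ (by omega), if_pos rfl, phiGenImg, incl_gen (by omega) (by omega)]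
  split_ifs <;> first | rfl | omega

lemma phiLetter_gen_succ {k x : ℕ} (hk : k + 1 ≤ N) (hx : x ≠ k)
    (hx' : x ≠ k + 1) (hxN : x ≤ N) :
    phiLetter N (k, true) (gen N x (k+1)) = gen N x k := by
  by_cases h1 : 1 ≤ x
  · rw [phiLetter_gen _ (by omega), if_pos rfl, phiGenImg, if_neg hx, if_neg hx',
      if_neg (by omega), if_pos rfl]
  · rw [gen_of_not_valid (by omega), map_zero, gen_of_not_valid (by omega)]

lemma phiWord_tauWord_gen_col_of_lt_or_gt {a p x : ℕ} (hN : a + p ≤ N)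
    (hx : 1 ≤ x) (hxN : x ≤ N) (hout : x < a ∨ a + p < x) :
    phiWord (N+1) (tauWord a p) (gen (N+1) x (N+1)) = gen (N+1) x (N+1) := by
  induction p generalizing a with
  | zero => rfl
  | succ p ih =>
    rw [tauWord_succ, phiWord_cons]
    rw [ih (by omega) (by omega), phiLetter_gen_col (by omega) hx hxN,
      if_neg (by omega), if_neg (by omega)]

lemma phiWord_tauWord_gen_col_top {a p : ℕ} (hN : a + p ≤ N) :
    phiWord (N+1) (tauWord a p) (gen (N+1) (a+p) (N+1)) = gen (N+1) a (N+1) := by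
  induction p generalizing a with
  | zero => rfl
  | succ p ih =>
    rw [tauWord_succ, phiWord_cons, show a + (p+1) = (a+1) + p by omega]
    rw [ih (by omega), phiLetter_gen_col (by omega) (by omega) (by omega),
      if_neg (by omega), if_pos rfl]

lemma phiWord_tauWord_gen_col_of_lt {a p t : ℕ} (ha : 1 ≤ a) (hN : a + p ≤ N) (ht : t < p) :
    phiWord (N+1) (tauWord a p) (gen (N+1) (a+t) (N+1)) =
      gen (N+1) (a+t+1) (N+1) - incl N (gen N (a+t+1) a) * gen (N+1) a (N+1) := by
  induction p generalizing a t with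
  | zero => omega
  | succ p ih =>
    rw [tauWord_succ, phiWord_cons]
    rcases Nat.eq_zero_or_pos t with rfl | ht0
    · rw [phiWord_tauWord_gen_col_of_lt_or_gt (by omega) (by omega) (by omega) (by omega),
        phiLetter_gen_col (by omega) (by omega) (by omega), if_pos (add_zero a)]
    · rw [show a + t = (a+1) + (t-1) by omega, ih (by omega) (by omega) (by omega),
        show a + 1 + (t-1) + 1 = a + t + 1 by omega, map_sub, map_mul,
        phiLetter_gen_col (by omega) (by omega) (by omega), if_neg (by omega), if_neg (by omega),
        phiLetter_gen_col (x := a+1) (by omega) (by omega) (by omega), if_neg (by omega), if_pos rfl,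
        phiLetter_incl (by omega), phiLetter_gen_succ (by omega) (by omega) (by omega) (by omega)]

lemma phiWord_kappaWord_gen_col_of_lt_or_ge {a l p x : ℕ} (hN : a + l + p ≤ N + 1)
    (hx : 1 ≤ x) (hxN : x ≤ N) (hout : x < a ∨ a + l + p ≤ x) :
    phiWord (N+1) (kappaWord a l p) (gen (N+1) x (N+1)) = gen (N+1) x (N+1) := by
  induction l with
  | zero => rfl
  | succ l ih =>
    rw [kappaWord_succ, phiWord_append, ih (by omega) (by omega),
      phiWord_tauWord_gen_col_of_lt_or_gt (by omega) hx hxN (by omega)]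

lemma phiWord_kappaWord_gen_col_of_ge {a l p r : ℕ} (ha : 1 ≤ a) (hN : a + l + p ≤ N + 1)
    (hr : r < l) :
    phiWord (N+1) (kappaWord a l p) (gen (N+1) (a+p+r) (N+1)) = gen (N+1) (a+r) (N+1) := by
  induction l with
  | zero => omega
  | succ l ih =>
    rw [kappaWord_succ, phiWord_append]
    rcases Nat.lt_or_ge r l with h | h
    · rw [ih (by omega) h, phiWord_tauWord_gen_col_of_lt_or_gt (by omega) (by omega) (by omega)
        (by omega)]
    · obtain rfl : r = l := by omega
      rw [phiWord_kappaWord_gen_col_of_lt_or_ge (by omega) (by omega) (by omega) (by omega),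
        show a + p + r = (a + r) + p by omega, phiWord_tauWord_gen_col_top (by omega)]

lemma phiWord_sum_of_fix {w : List (ℕ × Bool)} (hw : WordIn N w) {S : Finset ℕ}
    (hS : ∀ v ∈ S, phiWord (N+1) w (gen (N+1) v (N+1)) = gen (N+1) v (N+1)) (c : ℕ → FA N) :
    phiWord (N+1) w (∑ v ∈ S, incl N (c v) * gen (N+1) v (N+1)) =
      ∑ v ∈ S, incl N (phiWord N w (c v)) * gen (N+1) v (N+1) := by
  rw [map_sum]
  exact Finset.sum_congr rfl fun v hv => by rw [map_mul, phiWord_incl hw, hS v hv]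

lemma phiWord_kappaWord_gen_col_of_lt {a l p t : ℕ} (ha : 1 ≤ a) (hl : l ≤ p) (ht : t < p)
    (hN : a + p + p ≤ N + 1) :
    ∃ c : ℕ → FA N,
      phiWord (N+1) (kappaWord a l p) (gen (N+1) (a+t) (N+1)) =
        gen (N+1) (a+t+l) (N+1) + ∑ v ∈ Finset.Ico a (a+l), incl N (c v) * gen (N+1) v (N+1) := by
  induction l with
  | zero => exact ⟨0, by simp [kappaWord, phiWord]⟩
  | succ l ih =>
    obtain ⟨c, hc⟩ := ih (by omega)
    have hτ := wordIn_tauWord (N := N) (a := a + l) (p := p) (by omega) (by omega)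
    have hsum : ∑ v ∈ Finset.Ico a (a+l), incl N (Function.update
          (fun v => phiWord N (tauWord (a+l) p) (c v)) (a+l) (-gen N (a+l+t+1) (a+l)) v) *
          gen (N+1) v (N+1) =
        ∑ v ∈ Finset.Ico a (a+l), incl N (phiWord N (tauWord (a+l) p) (c v)) * gen (N+1) v (N+1) :=
      Finset.sum_congr rfl fun v hv => by
        rw [Function.update_of_ne (by rw [Finset.mem_Ico] at hv; omega)]
    refine ⟨Function.update (fun v => phiWord N (tauWord (a+l) p) (c v)) (a+l)
      (-gen N (a+l+t+1) (a+l)), ?_⟩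
    rw [kappaWord_succ, phiWord_append, hc, map_add, phiWord_sum_of_fix hτ
        (fun v hv => have hv := Finset.mem_Ico.mp hv
          phiWord_tauWord_gen_col_of_lt_or_gt (by omega) (by omega) (by omega) (by omega)),
      show a + t + l = (a + l) + t by omega, phiWord_tauWord_gen_col_of_lt (by omega) (by omega) ht,
      show a + (l+1) = (a + l) + 1 by omega, Finset.sum_Ico_succ_top (by omega), hsum,
      Function.update_self, map_neg, neg_mul, show a + l + t + 1 = a + t + (l + 1) by omega]
    abel

lemma phiWord_cable_tauWord_gen_col_of_gt {p m x : ℕ} (hm : m * p + p ≤ N)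
    (hx : 1 ≤ x) (hxN : x ≤ N) (hout : m * p + p < x) :
    phiWord (N+1) (cable p (tauWord 1 m)) (gen (N+1) x (N+1)) = gen (N+1) x (N+1) := by
  induction m with
  | zero => rfl
  | succ m ih =>
    rw [Nat.succ_mul] at hm hout
    rw [cable_tauWord_succ, phiWord_append,
      phiWord_kappaWord_gen_col_of_lt_or_ge (by omega) hx hxN (by omega),
      ih (by omega) (by omega)]

lemma phiWord_cable_tauWord_gen_col_last {p m s : ℕ} (hs : s ∈ Finset.Icc 1 p)
    (hm : m * p + p ≤ N) :
    phiWord (N+1) (cable p (tauWord 1 m)) (gen (N+1) (m * p + s) (N+1)) = gen (N+1) s (N+1) := by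
  rw [Finset.mem_Icc] at hs
  induction m with
  | zero => simp [tauWord, cable, phiWord]
  | succ m ih =>
    rw [Nat.succ_mul] at hm
    rw [cable_tauWord_succ, phiWord_append,
      show (m+1) * p + s = (m * p + 1) + p + (s - 1) by rw [Nat.succ_mul]; omega,
      phiWord_kappaWord_gen_col_of_ge (by omega) (by omega) (by omega),
      show m * p + 1 + (s - 1) = m * p + s by omega, ih (by omega)]

lemma phiWord_cable_tauWord_gen_col_of_le {p m u : ℕ} (hu : u ∈ Finset.Icc 1 (m * p))
    (hm : m * p + p ≤ N) :
    ∃ c : ℕ → FA N,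
      phiWord (N+1) (cable p (tauWord 1 m)) (gen (N+1) u (N+1)) =
        gen (N+1) (u + p) (N+1) + ∑ v ∈ Finset.Icc 1 p, incl N (c v) * gen (N+1) v (N+1) := by
  rw [Finset.mem_Icc] at hu
  induction m with
  | zero => omega
  | succ m ih =>
    rw [Nat.succ_mul] at hu hm
    rw [cable_tauWord_succ, phiWord_append]
    rcases Nat.lt_or_ge (m * p) u with h | h
    · obtain ⟨c, hc⟩ := phiWord_kappaWord_gen_col_of_lt (N := N) (a := m*p+1) (l := p)
        (t := u - (m*p+1)) (by omega) le_rfl (by omega) (by omega)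
      have hC := wordIn_cable_tauWord (N := N) (p := p) (m := m) (by omega)
      refine ⟨fun v => phiWord N (cable p (tauWord 1 m)) (c (m * p + v)), ?_⟩
      rw [show u = m * p + 1 + (u - (m*p+1)) by omega, hc, map_add,
        show m * p + 1 + (u - (m * p + 1)) + p = u + p by omega,
        phiWord_cable_tauWord_gen_col_of_gt (by omega) (by omega) (by omega) (by omega), map_sum]
      refine congrArg _ (Finset.sum_nbij' (· - m * p) (m * p + ·) ?_ ?_ ?_ ?_ fun v hv => ?_) <;>
        simp only [Finset.mem_Ico, Finset.mem_Icc] at * <;> try omega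
      obtain ⟨s, rfl⟩ : ∃ s, v = m * p + s := ⟨v - m * p, by omega⟩
      rw [map_mul, phiWord_incl hC, Nat.add_sub_cancel_left,
        phiWord_cable_tauWord_gen_col_last (Finset.mem_Icc.mpr ⟨by omega, by omega⟩) (by omega)]
    · obtain ⟨c, hc⟩ := ih ⟨hu.1, h⟩ (by omega)
      exact ⟨c, by rw [phiWord_kappaWord_gen_col_of_lt_or_ge (by omega) (by omega) (by omega)
        (by omega), hc]⟩

end ColumnAction

section CableTau

variable {N p m : ℕ}

lemma IsPhiL.cable_tauWord_apply_of_lt {M : ℕ → ℕ → FA N}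
    (hM : IsPhiL N (cable p (tauWord 1 m)) M) (hN : m * p + p = N) {u b : ℕ}
    (hu : u ∈ Finset.Icc 1 N) (hb : p < b) (hbN : b ≤ N) :
    M u b = if u + p = b then 1 else 0 := by
  have hbN' : b ∈ Finset.Icc 1 N := by simp only [Finset.mem_Icc]; omega
  rw [hM.apply_eq_colCoeff hu hbN']
  rw [Finset.mem_Icc] at hu
  rcases Nat.lt_or_ge (m * p) u with h | h
  · obtain ⟨s, rfl⟩ : ∃ s, u = m * p + s := ⟨u - m * p, by omega⟩
    rw [phiWord_cable_tauWord_gen_col_last (Finset.mem_Icc.mpr ⟨by omega, by omega⟩) hN.le,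
      colCoeff_gen hbN', if_neg (by omega), if_neg (by omega)]
  · obtain ⟨c, hc⟩ := phiWord_cable_tauWord_gen_col_of_le (p := p) (m := m)
      (Finset.mem_Icc.mpr ⟨hu.1, h⟩) hN.le
    rw [hc, colCoeff_add, colCoeff_gen hbN', colCoeff_sum hbN',
      if_neg (show b ∉ Finset.Icc 1 p by simp only [Finset.mem_Icc]; omega), add_zero]

lemma IsPhiL.cable_tauWord_apply_last {M : ℕ → ℕ → FA N}
    (hM : IsPhiL N (cable p (tauWord 1 m)) M) (hN : m * p + p ≤ N) {s : ℕ}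
    (hs : s ∈ Finset.Icc 1 p) (b : ℕ) :
    M (m * p + s) b = if s = b then 1 else 0 := by
  by_cases hb : b ∈ Finset.Icc 1 N
  · rw [hM.apply_eq_colCoeff (by simp only [Finset.mem_Icc] at hs ⊢; omega) hb,
      phiWord_cable_tauWord_gen_col_last hs hN, colCoeff_gen hb]
  · rw [hM.1 _ _ (Or.inr hb), if_neg]
    rintro rfl
    simp only [Finset.mem_Icc] at hs hb
    omega

variable {w : List (ℕ × Bool)} {M M₁ M' : ℕ → ℕ → FA N}

lemma IsPhiL.cable_tauWord_append_apply_of_lt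
    (hM' : IsPhiL N (cable p (tauWord 1 m) ++ w) M') (hM₁ : IsPhiL N (cable p (tauWord 1 m)) M₁)
    (hM : IsPhiL N w M) (hN : m * p + p = N) (a : ℕ) {b : ℕ} (hb : p < b) (hbN : b ≤ N) :
    M' a b = phiWord N (cable p (tauWord 1 m)) (M a (b - p)) := by
  rw [hM'.apply_of_append (wordIn_cable_tauWord hN.le) hM₁ hM]
  calc _ = ∑ j ∈ Finset.Icc 1 N,
          if j = b - p then phiWord N (cable p (tauWord 1 m)) (M a j) else 0 :=
        Finset.sum_congr rfl fun j hj => by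
          rw [hM₁.cable_tauWord_apply_of_lt hN hj hb hbN, mul_ite, mul_one, mul_zero]
          exact if_congr (by omega) rfl rfl
    _ = _ := Finset.sum_ite_eq_of_mem' _ _ _ (Finset.mem_Icc.mpr ⟨by omega, by omega⟩)

lemma IsPhiL.append_cable_tauWord_apply_last
    (hM' : IsPhiL N (w ++ cable p (tauWord 1 m)) M') (hw : WordIn N w) (hM : IsPhiL N w M)
    (hM₁ : IsPhiL N (cable p (tauWord 1 m)) M₁) (hN : m * p + p ≤ N) {s : ℕ}
    (hs : s ∈ Finset.Icc 1 p) (b : ℕ) :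
    M' (m * p + s) b = M s b := by
  rw [hM'.apply_of_append hw hM hM₁]
  calc _ = ∑ j ∈ Finset.Icc 1 N, if s = j then M j b else 0 :=
        Finset.sum_congr rfl fun j _ => by
          rw [hM₁.cable_tauWord_apply_last hN hs, apply_ite (phiWord N w), map_one, map_zero,
            ite_mul, one_mul, zero_mul]
    _ = _ := Finset.sum_ite_eq_of_mem _ _ _ (by simp only [Finset.mem_Icc] at hs ⊢; omega)

lemma IsPhiL.append_cable_tauWord_apply_of_le
    (hM' : IsPhiL N (w ++ cable p (tauWord 1 m)) M') (hw : WordIn N w) (hM : IsPhiL N w M)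
    (hM₁ : IsPhiL N (cable p (tauWord 1 m)) M₁) (hN : m * p + p = N) {u : ℕ}
    (hu : u ∈ Finset.Icc 1 (m * p)) (b : ℕ) :
    M' u b = M (u + p) b + ∑ v ∈ Finset.Icc 1 p, phiWord N w (M₁ u v) * M v b := by
  rw [Finset.mem_Icc] at hu
  rw [hM'.apply_of_append hw hM hM₁, ← Finset.sum_filter_add_sum_filter_not _ (· ≤ p),
    add_comm]
  congr 1
  · calc _ = ∑ j ∈ Finset.Icc 1 N with ¬j ≤ p, if u + p = j then M j b else 0 :=
          Finset.sum_congr rfl fun j hj => by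
            simp only [Finset.mem_filter, Finset.mem_Icc] at hj
            rw [hM₁.cable_tauWord_apply_of_lt hN (Finset.mem_Icc.mpr ⟨by omega, by omega⟩)
                (by omega) hj.1.2, apply_ite (phiWord N w), map_one, map_zero, ite_mul,
              one_mul, zero_mul]
      _ = _ := Finset.sum_ite_eq_of_mem _ _ _ (Finset.mem_filter.mpr
          ⟨Finset.mem_Icc.mpr ⟨by omega, by omega⟩, by omega⟩)
  · exact Finset.sum_congr (by ext; simp only [Finset.mem_filter, Finset.mem_Icc]; omega)
      fun _ _ => rfl

end CableTau

lemma pred_mul_add_self {j : ℕ} (hj : 1 ≤ j) (p : ℕ) : (j - 1) * p + p = j * p := by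
  rw [← Nat.succ_mul, Nat.succ_eq_add_one, Nat.sub_add_cancel hj]

theorem block_recursions_general (n p z : ℕ)
    (Mz Mz1 M1 : ℕ → ℕ → FA (n*p))
    (hMz : IsPhiL (n*p) (powWord n p z) Mz)
    (hMz1 : IsPhiL (n*p) (powWord n p (z+1)) Mz1)
    (hM1 : IsPhiL (n*p) (powWord n p 1) M1) :
    (∀ i j, 1 ≤ i → i ≤ n → 1 ≤ j → j + 1 ≤ n →
      ∀ s ∈ Finset.Icc 1 p, ∀ t ∈ Finset.Icc 1 p,
        Mz1 ((i-1)*p + s) (j*p + t) =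
          phiWord (n*p) (cable p (tauWord 1 (n-1))) (Mz ((i-1)*p + s) ((j-1)*p + t))) ∧
    (∀ j, 1 ≤ j → j ≤ n → ∀ s ∈ Finset.Icc 1 p, ∀ t ∈ Finset.Icc 1 p,
        Mz1 ((n-1)*p + s) ((j-1)*p + t) = Mz s ((j-1)*p + t)) ∧
    (∀ i j, 1 ≤ i → i + 1 ≤ n → 1 ≤ j → j ≤ n →
      ∀ s ∈ Finset.Icc 1 p, ∀ t ∈ Finset.Icc 1 p,
        Mz1 ((i-1)*p + s) ((j-1)*p + t) =
          Mz (i*p + s) ((j-1)*p + t) +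
          ∑ u ∈ Finset.Icc 1 p,
            phiWord (n*p) (powWord n p z) (M1 ((i-1)*p + s) u) * Mz u ((j-1)*p + t)) := by
  rw [powWord_one] at hM1
  refine ⟨fun i j hi1 hin hj1 hjn s hs t ht => ?_, fun j hj1 hjn s hs _ _ => ?_,
    fun i j hi1 hin _ _ s hs _ _ => ?_⟩
  all_goals have hN := pred_mul_add_self (j := n) (by omega) p
  · have hj := pred_mul_add_self hj1 p
    have hjn := Nat.mul_le_mul_right p (show j ≤ n - 1 by omega)
    rw [Finset.mem_Icc] at hs ht
    rw [powWord_succ] at hMz1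
    rw [hMz1.cable_tauWord_append_apply_of_lt hM1 hMz hN _ (by omega) (by omega)]
    congr 2
    omega
  · rw [powWord_succ'] at hMz1
    exact hMz1.append_cable_tauWord_apply_last (wordIn_powWord hN.le) hMz hM1 hN.le hs _
  · have hi := pred_mul_add_self hi1 p
    have hin := Nat.mul_le_mul_right p (show i ≤ n - 1 by omega)
    rw [Finset.mem_Icc] at hs
    rw [powWord_succ'] at hMz1
    rw [hMz1.append_cable_tauWord_apply_of_le (wordIn_powWord hN.le) hMz hM1 hN
      (Finset.mem_Icc.mpr ⟨by omega, by omega⟩), show (i-1)*p + s + p = i*p + s by omega]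

/-- Recursions for the `p × p` blocks `Ψ^z_{ij}` of `Φ^L_{(τ^{(p)})^z}`:
(i) `Ψ^{z+1}_{i,j+1} = φ_{τ^{(p)}}(Ψ^z_{ij})`; (ii) `Ψ^{z+1}_{nj} = Ψ^z_{1j}`;
(iii) `Ψ^{z+1}_{ij} = Ψ^z_{i+1,j} + φ_{(τ^{(p)})^z}(Ψ^1_{i1})·Ψ^z_{1j}` for `i < n`. -/
theorem block_recursions (n p z : ℕ) (hn : 2 ≤ n) (hp : 2 ≤ p) (hz : 1 ≤ z)
    (Mz Mz1 M1 : ℕ → ℕ → FA (n*p))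
    (hMz : IsPhiL (n*p) (powWord n p z) Mz)
    (hMz1 : IsPhiL (n*p) (powWord n p (z+1)) Mz1)
    (hM1 : IsPhiL (n*p) (powWord n p 1) M1) :
    (∀ i j, 1 ≤ i → i ≤ n → 1 ≤ j → j + 1 ≤ n →
      ∀ s ∈ Finset.Icc 1 p, ∀ t ∈ Finset.Icc 1 p,
        Mz1 ((i-1)*p + s) (j*p + t) =
          phiWord (n*p) (cable p (tauWord 1 (n-1))) (Mz ((i-1)*p + s) ((j-1)*p + t))) ∧
    (∀ j, 1 ≤ j → j ≤ n → ∀ s ∈ Finset.Icc 1 p, ∀ t ∈ Finset.Icc 1 p,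
        Mz1 ((n-1)*p + s) ((j-1)*p + t) = Mz s ((j-1)*p + t)) ∧
    (∀ i j, 1 ≤ i → i + 1 ≤ n → 1 ≤ j → j ≤ n →
      ∀ s ∈ Finset.Icc 1 p, ∀ t ∈ Finset.Icc 1 p,
        Mz1 ((i-1)*p + s) ((j-1)*p + t) =
          Mz (i*p + s) ((j-1)*p + t) +
          ∑ u ∈ Finset.Icc 1 p,
            phiWord (n*p) (powWord n p z) (M1 ((i-1)*p + s) u) * Mz u ((j-1)*p + t)) :=
  block_recursions_general n p z Mz Mz1 M1 hMz hMz1 hM1
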